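/- (Eckart–Young for vectors) Let v ∈ H_L ⊗ H_R have Schmidt decomposition v = Σ_j λ_j a_j ⊗ b_j with λ_1 ≥ λ_2 ≥ ... Then for any integer D ≥ 1 with trim_D(v) ≠ 0, the unit vector v' = trim_D(v)/‖trim_D(v)‖ satisfies ⟨v', v⟩ ≥ |⟨w, v⟩| for every unit vector w of Schmidt rank at most D. -/

import Mathlib

/-!
Let `K` be the span of the left factors `x k` of `w`. Projecting every `a j` onto `K` does not
change `⟪w, v⟫`, and turns `v` into a vector `u` with `‖u‖² = ∑ λⱼ² μⱼ`, `μⱼ = ‖P_K aⱼ‖²`, because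
the `b j` are orthonormal. By Bessel's inequality the weights `μⱼ ∈ [0, 1]` sum to at most
`dim K ≤ D`, so for decreasing `λ` this is at most `∑_{j<D} λⱼ² = ‖trim_D v‖²`. Finally
`⟪trim_D v, v⟫ = ‖trim_D v‖²`, so the right-hand side equals `‖trim_D v‖ ≥ ‖u‖ ≥ |⟪w, v⟫|`.
-/

/-- Elementary tensor of two vectors, in the function model of `H_L ⊗ H_R`. -/
noncomputable def tens {p q : ℕ} (a : EuclideanSpace ℂ (Fin p)) (b : EuclideanSpace ℂ (Fin q)) :
    EuclideanSpace ℂ (Fin p × Fin q) := WithLp.toLp 2 (fun x : Fin p × Fin q => a x.1 * b x.2)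

open Finset ComplexConjugate Module

theorem sum_mul_le_sum_of_sum_le_card {ι : Type*} [Fintype ι] (s : Finset ι) {f μ : ι → ℝ}
    {c : ℝ} (hc : 0 ≤ c) (hs : ∀ i ∈ s, c ≤ f i) (hsc : ∀ i ∉ s, f i ≤ c)
    (hμ0 : ∀ i, 0 ≤ μ i) (hμ1 : ∀ i, μ i ≤ 1) (hμ : ∑ i, μ i ≤ #s) :
    ∑ i, f i * μ i ≤ ∑ i ∈ s, f i := by
  classical
  calc ∑ i, f i * μ i = ∑ i, (f i - c) * μ i + c * ∑ i, μ i := by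
        rw [mul_sum, ← sum_add_distrib]; congr! 1 with i; ring
    _ ≤ ∑ i, (if i ∈ s then f i - c else 0) + c * #s := by
        gcongr with i
        split_ifs with hi
        · exact mul_le_of_le_one_right (sub_nonneg.2 (hs i hi)) (hμ1 i)
        · exact mul_nonpos_of_nonpos_of_nonneg (sub_nonpos.2 (hsc i hi)) (hμ0 i)
    _ = ∑ i ∈ s, f i := by
        rw [sum_ite_mem, univ_inter, sum_sub_distrib, sum_const, nsmul_eq_mul]; ring

theorem Antitone.sum_mul_le_sum_filter_lt {N D : ℕ} {f μ : Fin N → ℝ} (hf0 : ∀ j, 0 ≤ f j)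
    (hf : Antitone f) (hμ0 : ∀ j, 0 ≤ μ j) (hμ1 : ∀ j, μ j ≤ 1) (hμ : ∑ j, μ j ≤ D) :
    ∑ j, f j * μ j ≤ ∑ j ∈ univ.filter (fun j : Fin N => (j : ℕ) < D), f j := by
  have hcard : ∑ j, μ j ≤ #(univ.filter (fun j : Fin N => (j : ℕ) < D)) := by
    have hN : ∑ j, μ j ≤ N := by simpa using sum_le_sum fun j (_ : j ∈ univ) => hμ1 j
    rw [Fin.card_filter_val_lt, Nat.cast_min]
    exact le_min hN hμ
  rcases lt_or_ge D N with h | h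
  · refine sum_mul_le_sum_of_sum_le_card _ (hf0 ⟨D, h⟩) (fun j hj => hf ?_) (fun j hj => hf ?_)
      hμ0 hμ1 hcard
    · simp only [mem_filter, mem_univ, true_and] at hj
      exact Fin.le_def.2 hj.le
    · simp only [mem_filter, mem_univ, true_and, not_lt] at hj
      exact Fin.le_def.2 hj
  · refine sum_mul_le_sum_of_sum_le_card _ le_rfl (fun j _ => hf0 j) (fun j hj => ?_)
      hμ0 hμ1 hcard
    simp only [mem_filter, mem_univ, true_and, not_lt] at hj
    omega

theorem re_inner_inv_norm_smul_of_inner_eq {𝕜 E : Type*} [RCLike 𝕜] [NormedAddCommGroup E]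
    [InnerProductSpace 𝕜 E] {t v : E} (h : inner 𝕜 t v = inner 𝕜 t t) :
    RCLike.re (inner 𝕜 ((‖t‖ : 𝕜)⁻¹ • t) v) = ‖t‖ := by
  rw [inner_smul_left, h, inner_self_eq_norm_sq_to_K, map_inv₀, RCLike.conj_ofReal,
    ← RCLike.ofReal_inv, ← RCLike.ofReal_pow, ← RCLike.ofReal_mul, RCLike.ofReal_re]
  rcases eq_or_ne ‖t‖ 0 with h0 | h0
  · simp [h0]
  · field_simp

theorem Orthonormal.sum_norm_starProjection_sq_le_finrank {𝕜 E ι : Type*} [RCLike 𝕜]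
    [NormedAddCommGroup E] [InnerProductSpace 𝕜 E] [Fintype ι] {a : ι → E}
    (ha : Orthonormal 𝕜 a) (K : Submodule 𝕜 E) [FiniteDimensional 𝕜 K] :
    ∑ j, ‖K.starProjection (a j)‖ ^ 2 ≤ finrank 𝕜 K := by
  let e := stdOrthonormalBasis 𝕜 K
  have parseval (z : E) : ‖K.starProjection z‖ ^ 2 = ∑ i, ‖inner 𝕜 z (e i : E)‖ ^ 2 := by
    rw [K.starProjection_apply, Submodule.norm_coe, ← e.sum_sq_norm_inner_right]
    simp_rw [Submodule.inner_orthogonalProjectionOnto_eq_of_mem_left, norm_inner_symm]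
  calc ∑ j, ‖K.starProjection (a j)‖ ^ 2 = ∑ i, ∑ j, ‖inner 𝕜 (a j) (e i : E)‖ ^ 2 := by
        simp_rw [parseval]; exact sum_comm
    _ ≤ ∑ i, ‖(e i : E)‖ ^ 2 := sum_le_sum fun i _ => ha.sum_inner_products_le _
    _ = finrank 𝕜 K := by simp [Submodule.norm_coe, e.orthonormal.1]

section Tensor

variable {p q : ℕ}

theorem inner_tens (a c : EuclideanSpace ℂ (Fin p)) (b d : EuclideanSpace ℂ (Fin q)) :
    inner ℂ (tens a b) (tens c d) = inner ℂ a c * inner ℂ b d := by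
  simp only [tens, PiLp.inner_apply, RCLike.inner_apply, Fintype.sum_prod_type, sum_mul_sum,
    map_mul]
  exact sum_congr rfl fun i _ => sum_congr rfl fun j _ => by ring

variable {ι : Type*} [DecidableEq ι] {b : ι → EuclideanSpace ℂ (Fin q)}

theorem Orthonormal.inner_sum_smul_tens (hb : Orthonormal ℂ b) (s s' : Finset ι)
    (c c' : ι → ℂ) (z z' : ι → EuclideanSpace ℂ (Fin p)) :
    inner ℂ (∑ j ∈ s, c j • tens (z j) (b j)) (∑ j ∈ s', c' j • tens (z' j) (b j)) =
      ∑ j ∈ s ∩ s', conj (c j) * c' j * inner ℂ (z j) (z' j) := by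
  rw [← sum_ite_mem, sum_inner]
  refine sum_congr rfl fun j _ => ?_
  simp only [inner_smul_left, inner_sum, inner_smul_right, inner_tens, orthonormal_iff_ite.1 hb,
    mul_ite, mul_one, mul_zero, sum_ite_eq]
  split_ifs <;> ring

theorem Orthonormal.norm_sum_smul_tens_sq (hb : Orthonormal ℂ b) (s : Finset ι)
    (c : ι → ℂ) (z : ι → EuclideanSpace ℂ (Fin p)) :
    ‖∑ j ∈ s, c j • tens (z j) (b j)‖ ^ 2 = ∑ j ∈ s, ‖c j‖ ^ 2 * ‖z j‖ ^ 2 := by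
  have h := hb.inner_sum_smul_tens s s c c z z
  simp only [inner_self_eq_norm_sq_to_K, inter_self, RCLike.conj_mul] at h
  exact_mod_cast h

theorem inner_tens_starProjection_right {K : Submodule ℂ (EuclideanSpace ℂ (Fin p))}
    [K.HasOrthogonalProjection] {z : EuclideanSpace ℂ (Fin p)} (hz : z ∈ K)
    (y : EuclideanSpace ℂ (Fin q)) (a : EuclideanSpace ℂ (Fin p)) (b : EuclideanSpace ℂ (Fin q)) :
    inner ℂ (tens z y) (tens (K.starProjection a) b) = inner ℂ (tens z y) (tens a b) := by
  rw [inner_tens, inner_tens, ← K.inner_starProjection_left_eq_right,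
    K.starProjection_eq_self_iff.2 hz]

theorem Orthonormal.norm_inner_sum_tens_le_of_antitone {N D : ℕ}
    {a : Fin N → EuclideanSpace ℂ (Fin p)} {b : Fin N → EuclideanSpace ℂ (Fin q)}
    (ha : Orthonormal ℂ a) (hb : Orthonormal ℂ b)
    {lam : Fin N → ℝ} (hlam : ∀ j, 0 ≤ lam j) (hmono : Antitone lam)
    (x : Fin D → EuclideanSpace ℂ (Fin p)) (y : Fin D → EuclideanSpace ℂ (Fin q)) :
    ‖inner ℂ (∑ k, tens (x k) (y k)) (∑ j, (lam j : ℂ) • tens (a j) (b j))‖ ≤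
      ‖∑ k, tens (x k) (y k)‖ *
        ‖∑ j ∈ univ.filter (fun j : Fin N => (j : ℕ) < D), (lam j : ℂ) • tens (a j) (b j)‖ := by
  set K := Submodule.span ℂ (Set.range x)
  set u := ∑ j, (lam j : ℂ) • tens (K.starProjection (a j)) (b j)
  have hwu : inner ℂ (∑ k, tens (x k) (y k)) (∑ j, (lam j : ℂ) • tens (a j) (b j)) =
      inner ℂ (∑ k, tens (x k) (y k)) u := by
    have hx (k : Fin D) : x k ∈ K := Submodule.subset_span (Set.mem_range_self k)
    simp only [u, sum_inner, inner_sum, inner_smul_right,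
      fun k => inner_tens_starProjection_right (hx k) (y k)]
  have hdim : ∑ j, ‖K.starProjection (a j)‖ ^ 2 ≤ D := by
    have := finrank_range_le_card (R := ℂ) x
    rw [Fintype.card_fin] at this
    exact (ha.sum_norm_starProjection_sq_le_finrank K).trans (by exact_mod_cast this)
  have hu : ‖u‖ ^ 2 ≤ ‖∑ j ∈ univ.filter (fun j : Fin N => (j : ℕ) < D),
      (lam j : ℂ) • tens (a j) (b j)‖ ^ 2 := by
    simp only [u, hb.norm_sum_smul_tens_sq, Complex.norm_real, Real.norm_eq_abs, sq_abs, ha.1 _,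
      one_pow, mul_one]
    refine Antitone.sum_mul_le_sum_filter_lt (fun j => sq_nonneg _)
      (fun j k hjk => pow_le_pow_left₀ (hlam k) (hmono hjk) 2) (fun j => sq_nonneg _)
      (fun j => ?_) hdim
    simpa [ha.1 j] using pow_le_pow_left₀ (norm_nonneg _) (K.norm_starProjection_apply_le (a j)) 2
  rw [hwu]
  exact (norm_inner_le_norm _ _).trans
    (by gcongr; exact (pow_le_pow_iff_left₀ (norm_nonneg _) (norm_nonneg _) two_ne_zero).1 hu)

end Tensor

theorem eckart_young_vectors_general
    {p q N D : ℕ}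
    (v : EuclideanSpace ℂ (Fin p × Fin q))
    (a : Fin N → EuclideanSpace ℂ (Fin p)) (b : Fin N → EuclideanSpace ℂ (Fin q))
    (ha : Orthonormal ℂ a) (hb : Orthonormal ℂ b)
    (lam : Fin N → ℝ) (hlam : ∀ j, 0 ≤ lam j)
    (hmono : ∀ j k : Fin N, j ≤ k → lam k ≤ lam j)
    (hdecomp : v = ∑ j, (lam j : ℂ) • tens (a j) (b j))
    (t : EuclideanSpace ℂ (Fin p × Fin q))
    (ht : t = ∑ j ∈ Finset.univ.filter (fun j : Fin N => (j : ℕ) < D),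
        (lam j : ℂ) • tens (a j) (b j)) :
    ∀ (w : EuclideanSpace ℂ (Fin p × Fin q)), ‖w‖ = 1 →
      ∀ (x : Fin D → EuclideanSpace ℂ (Fin p)) (y : Fin D → EuclideanSpace ℂ (Fin q)),
        w = ∑ k, tens (x k) (y k) →
        ‖(inner ℂ w v : ℂ)‖ ≤ (inner ℂ ((‖t‖ : ℂ)⁻¹ • t) v : ℂ).re := by
  intro w hw x y hwxy
  have htv : inner ℂ t v = inner ℂ t t := by
    rw [ht, hdecomp, hb.inner_sum_smul_tens, hb.inner_sum_smul_tens, inter_univ, inter_self]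
  have hre : (inner ℂ ((‖t‖ : ℂ)⁻¹ • t) v).re = ‖t‖ := re_inner_inv_norm_smul_of_inner_eq htv
  rw [hre]
  subst hdecomp ht hwxy
  simpa [hw] using
    ha.norm_inner_sum_tens_le_of_antitone hb hlam (fun j k hjk => hmono j k hjk) x y

/-- Eckart–Young for vectors: if `v = Σ_j λ_j a_j ⊗ b_j` is a Schmidt
decomposition (decreasing coefficients) and `t = trim_D(v) ≠ 0`, then the unit vector
`v' = t/‖t‖` satisfies `⟨v', v⟩ ≥ |⟨w, v⟩|` for every unit vector `w` of Schmidt rank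
at most `D`. -/
theorem eckart_young_vectors
    {p q N D : ℕ} (hD : 1 ≤ D)
    (v : EuclideanSpace ℂ (Fin p × Fin q))
    (a : Fin N → EuclideanSpace ℂ (Fin p)) (b : Fin N → EuclideanSpace ℂ (Fin q))
    (ha : Orthonormal ℂ a) (hb : Orthonormal ℂ b)
    (lam : Fin N → ℝ) (hlam : ∀ j, 0 ≤ lam j)
    (hmono : ∀ j k : Fin N, j ≤ k → lam k ≤ lam j)
    (hdecomp : v = ∑ j, (lam j : ℂ) • tens (a j) (b j))
    (t : EuclideanSpace ℂ (Fin p × Fin q))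
    (ht : t = ∑ j ∈ Finset.univ.filter (fun j : Fin N => (j : ℕ) < D),
        (lam j : ℂ) • tens (a j) (b j))
    (ht0 : t ≠ 0) :
    ∀ (w : EuclideanSpace ℂ (Fin p × Fin q)), ‖w‖ = 1 →
      ∀ (x : Fin D → EuclideanSpace ℂ (Fin p)) (y : Fin D → EuclideanSpace ℂ (Fin q)),
        w = ∑ k, tens (x k) (y k) →
        ‖(inner ℂ w v : ℂ)‖ ≤ (inner ℂ ((‖t‖ : ℂ)⁻¹ • t) v : ℂ).re :=
  eckart_young_vectors_general v a b ha hb lam hlam hmono hdecomp t ht
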